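/- arXiv:2403.03675 — 4 statements merged into one kernel-verified Lean document; each statement's English description precedes it below -/
import Mathlib

section
/- Let V, S ∈ ℂ^{n1×n2×n3}, G0 ∈ ℂ^{r1×r2×r3}, η > 0, α ∈ ℕ, and let U1 ∈ ℂ^{n1×r1}, U2 ∈ ℂ^{n2×r2}, U3 ∈ ℂ^{n3×r3} be semi-orthogonal. Set A = (η·[[V − S; U1ᴴ, U2ᴴ, U3ᴴ]] + G0)/(η + 1) ∈ ℂ^{r1×r2×r3}. Then any top-α hard thresholding Ĝ of A minimizes G ↦ (1/2)‖G − G0‖² + (η/2)‖V − S − [[G;U1,U2,U3]]‖² over the set {G ∈ ℂ^{r1×r2×r3} : ‖G‖₀ ≤ α}. -/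
/-!
The Tucker map `G ↦ [[G; U1, U2, U3]]` is multiplication by the Kronecker matrix
`K = U1 ⊗ U2 ⊗ U3`, which satisfies `Kᴴ K = 1` and has adjoint `[[·; U1ᴴ, U2ᴴ, U3ᴴ]]`.
Completing the square therefore turns the objective into `((η + 1)/2) ‖G - A‖²` plus a
constant, so it remains to minimise `‖G - A‖²` over `α`-sparse `G`. For `G` supported on `J`
this is at least the mass `∑_{i ∉ J} |A_i|²` left outside `J`, which is smallest when `J`
collects the `α` largest entries of `A`; keeping exactly those entries attains it.
-/

open scoped BigOperators
open Matrix Classical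

/-- Number of nonzero entries (the "ℓ₀ norm") of a complex array. -/
noncomputable def l0 {ι : Type*} [Fintype ι] (x : ι → ℂ) : ℕ :=
  (Finset.univ.filter fun i => x i ≠ 0).card

/-- `yhat` is a top-`α` hard thresholding of `a`. -/
def IsTopThresh {ι : Type*} [Fintype ι] (α : ℕ) (a yhat : ι → ℂ) : Prop :=
  ∃ I : Finset ι, I.card = min α (Fintype.card ι) ∧
    (∀ i ∈ I, ∀ j, j ∉ I → ‖a j‖ ≤ ‖a i‖) ∧
    (∀ i, yhat i = if i ∈ I then a i else 0)

/-- The Tucker product `[[G; U1, U2, U3]]`. -/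
noncomputable def tucker {r1 r2 r3 n1 n2 n3 : ℕ}
    (G : Fin r1 × Fin r2 × Fin r3 → ℂ)
    (U1 : Matrix (Fin n1) (Fin r1) ℂ) (U2 : Matrix (Fin n2) (Fin r2) ℂ)
    (U3 : Matrix (Fin n3) (Fin r3) ℂ) :
    Fin n1 × Fin n2 × Fin n3 → ℂ :=
  fun a => ∑ i : Fin r1 × Fin r2 × Fin r3,
    G i * U1 a.1 i.1 * U2 a.2.1 i.2.1 * U3 a.2.2 i.2.2

open scoped InnerProductSpace Kronecker
open Finset

theorem Finset.sum_compl_le_sum_compl_of_card_le {ι M : Type*} [Fintype ι] [DecidableEq ι]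
    [AddCommMonoid M] [LinearOrder M] [IsOrderedCancelAddMonoid M]
    {w : ι → M} (hw : ∀ i, 0 ≤ w i) {I J : Finset ι} (hcard : #J ≤ #I)
    (hdom : ∀ i ∈ I, ∀ j ∉ I, w j ≤ w i) :
    ∑ i ∈ Iᶜ, w i ≤ ∑ i ∈ Jᶜ, w i := by
  rw [← sum_sdiff_le_sum_sdiff, compl_sdiff_compl, compl_sdiff_compl]
  have hcard' : #(J \ I) ≤ #(I \ J) := card_sdiff_le_card_sdiff_iff.mpr hcard
  obtain hIJ | hIJ := (I \ J).eq_empty_or_nonempty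
  · have hJI : J \ I = ∅ := by simpa [hIJ] using hcard'
    simp [hIJ, hJI]
  obtain ⟨i₀, hi₀, hmin⟩ := exists_min_image (I \ J) w hIJ
  calc ∑ j ∈ J \ I, w j ≤ #(J \ I) • w i₀ :=
        sum_le_card_nsmul _ _ _ fun j hj => hdom i₀ (mem_sdiff.1 hi₀).1 j (mem_sdiff.1 hj).2
    _ ≤ #(I \ J) • w i₀ := nsmul_le_nsmul_left (hw i₀) hcard'
    _ ≤ ∑ i ∈ I \ J, w i := card_nsmul_le_sum _ _ _ hmin

section CompletingSquare

variable {𝕜 E F : Type*} [RCLike 𝕜] [NormedAddCommGroup E] [InnerProductSpace 𝕜 E]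
  [NormedAddCommGroup F] [InnerProductSpace 𝕜 F]

open RCLike in
theorem proximal_objective_eq_norm_sub_sq_add {g g₀ a b : E} {x y : F} (η : ℝ) (hx : ‖x‖ = ‖g‖)
    (hxy : re ⟪y, x⟫_𝕜 = re ⟪b, g⟫_𝕜) (ha : ((η + 1 : ℝ) : 𝕜) • a = (η : 𝕜) • b + g₀) :
    1 / 2 * ‖g - g₀‖ ^ 2 + η / 2 * ‖y - x‖ ^ 2
      = (η + 1) / 2 * ‖g - a‖ ^ 2
        + (1 / 2 * ‖g₀‖ ^ 2 + η / 2 * ‖y‖ ^ 2 - (η + 1) / 2 * ‖a‖ ^ 2) := by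
  have hga : (η + 1) * re ⟪g, a⟫_𝕜 = η * re ⟪b, g⟫_𝕜 + re ⟪g, g₀⟫_𝕜 := by
    have := congrArg (fun v => re ⟪g, v⟫_𝕜) ha
    rwa [inner_smul_real_right, inner_add_right, inner_smul_real_right, map_add, smul_re,
      smul_re, inner_re_symm g b] at this
  rw [norm_sub_sq (𝕜 := 𝕜), norm_sub_sq (𝕜 := 𝕜), norm_sub_sq (𝕜 := 𝕜), hx, hxy]
  linear_combination hga

end CompletingSquare

namespace Matrix

open WithLp

variable {𝕜 m n : Type*} [RCLike 𝕜] [Fintype m] [Fintype n]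

theorem inner_toLp_mulVec_right (K : Matrix m n 𝕜) (y : m → 𝕜) (g : n → 𝕜) :
    ⟪toLp 2 y, toLp 2 (K *ᵥ g)⟫_𝕜 = ⟪toLp 2 (Kᴴ *ᵥ y), toLp 2 g⟫_𝕜 := by
  rw [EuclideanSpace.inner_toLp_toLp, EuclideanSpace.inner_toLp_toLp, star_mulVec,
    conjTranspose_conjTranspose, dotProduct_comm, dotProduct_mulVec, dotProduct_comm]

variable [DecidableEq n]

theorem norm_toLp_mulVec_of_conjTranspose_mul_self {K : Matrix m n 𝕜} (hK : Kᴴ * K = 1)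
    (g : n → 𝕜) : ‖toLp 2 (K *ᵥ g)‖ = ‖toLp 2 g‖ := by
  have h : ⟪toLp 2 (K *ᵥ g), toLp 2 (K *ᵥ g)⟫_𝕜 = ⟪toLp 2 g, toLp 2 g⟫_𝕜 := by
    rw [inner_toLp_mulVec_right, mulVec_mulVec, hK, one_mulVec]
  rw [inner_self_eq_norm_sq_to_K, inner_self_eq_norm_sq_to_K] at h
  exact (pow_left_inj₀ (norm_nonneg _) (norm_nonneg _) two_ne_zero).1 (by exact_mod_cast h)

theorem proximal_objective_mulVec_eq {K : Matrix m n 𝕜} (hK : Kᴴ * K = 1) (y : m → 𝕜)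
    {g₀ a : n → 𝕜} (η : ℝ) (ha : ∀ i, ((η : 𝕜) + 1) * a i = η * (Kᴴ *ᵥ y) i + g₀ i) (g : n → 𝕜) :
    1 / 2 * ∑ i, ‖g i - g₀ i‖ ^ 2 + η / 2 * ∑ j, ‖y j - (K *ᵥ g) j‖ ^ 2
      = (η + 1) / 2 * ∑ i, ‖g i - a i‖ ^ 2
        + (1 / 2 * ∑ i, ‖g₀ i‖ ^ 2 + η / 2 * ∑ j, ‖y j‖ ^ 2 - (η + 1) / 2 * ∑ i, ‖a i‖ ^ 2) := by
  have := proximal_objective_eq_norm_sub_sq_add (g := toLp 2 g) (g₀ := toLp 2 g₀)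
    (a := toLp 2 a) (b := toLp 2 (Kᴴ *ᵥ y)) (y := toLp 2 y) η
    (norm_toLp_mulVec_of_conjTranspose_mul_self hK g)
    (by rw [inner_toLp_mulVec_right])
    (by ext i; simpa [RCLike.real_smul_eq_coe_mul, RCLike.algebraMap_eq_ofReal] using ha i)
  simpa only [← toLp_sub, EuclideanSpace.norm_sq_eq, PiLp.toLp_apply, Pi.sub_apply] using this

end Matrix

section Thresholding

variable {ι : Type*} [Fintype ι] {α : ℕ} {a yhat : ι → ℂ}

theorem IsTopThresh.l0_le (h : IsTopThresh α a yhat) : l0 yhat ≤ α := by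
  obtain ⟨I, hI, -, hyhat⟩ := h
  calc l0 yhat ≤ #I := card_le_card fun i hi => by
          by_contra hiI
          exact (mem_filter.1 hi).2 (by rw [hyhat, if_neg hiI])
    _ ≤ α := hI ▸ min_le_left _ _

theorem IsTopThresh.sum_norm_sub_sq_le (h : IsTopThresh α a yhat) {g : ι → ℂ} (hg : l0 g ≤ α) :
    ∑ i, ‖yhat i - a i‖ ^ 2 ≤ ∑ i, ‖g i - a i‖ ^ 2 := by
  obtain ⟨I, hI, hdom, hyhat⟩ := h
  set J := univ.filter fun i => g i ≠ 0
  have hyhat_sum : ∑ i, ‖yhat i - a i‖ ^ 2 = ∑ i ∈ Iᶜ, ‖a i‖ ^ 2 := by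
    rw [← sum_add_sum_compl I, sum_eq_zero fun i hi => by simp [hyhat, hi], zero_add]
    exact sum_congr rfl fun i hi => by simp [hyhat, mem_compl.1 hi]
  have hg_sum : ∑ i ∈ Jᶜ, ‖a i‖ ^ 2 ≤ ∑ i, ‖g i - a i‖ ^ 2 := by
    calc ∑ i ∈ Jᶜ, ‖a i‖ ^ 2 = ∑ i ∈ Jᶜ, ‖g i - a i‖ ^ 2 :=
          sum_congr rfl fun i hi => by
            rw [show g i = 0 by simpa [J] using hi, zero_sub, norm_neg]
      _ ≤ ∑ i, ‖g i - a i‖ ^ 2 :=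
          sum_le_sum_of_subset_of_nonneg (subset_univ _) fun i _ _ => by positivity
  have hJI : #J ≤ #I := hI ▸ le_min hg (card_le_univ J)
  calc ∑ i, ‖yhat i - a i‖ ^ 2 = ∑ i ∈ Iᶜ, ‖a i‖ ^ 2 := hyhat_sum
    _ ≤ ∑ i ∈ Jᶜ, ‖a i‖ ^ 2 :=
        sum_compl_le_sum_compl_of_card_le (fun i => by positivity) hJI fun i hi j hj =>
          pow_le_pow_left₀ (norm_nonneg _) (hdom i hi j hj) 2
    _ ≤ ∑ i, ‖g i - a i‖ ^ 2 := hg_sum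

end Thresholding

theorem tucker_eq_kronecker_mulVec {r1 r2 r3 n1 n2 n3 : ℕ}
    (G : Fin r1 × Fin r2 × Fin r3 → ℂ)
    (U1 : Matrix (Fin n1) (Fin r1) ℂ) (U2 : Matrix (Fin n2) (Fin r2) ℂ)
    (U3 : Matrix (Fin n3) (Fin r3) ℂ) :
    tucker G U1 U2 U3 = (U1 ⊗ₖ (U2 ⊗ₖ U3)) *ᵥ G := by
  ext x
  exact sum_congr rfl fun i _ => by simp only [kroneckerMap_apply]; ring

/-- Closed-form solution of the core-tensor subproblem of the APBCD algorithm: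
with `A = (η·[[V − S; U1ᴴ, U2ᴴ, U3ᴴ]] + G0)/(η + 1)`, any top-`α` hard thresholding `Ĝ` of `A`
minimizes `G ↦ (1/2)‖G − G0‖² + (η/2)‖V − S − [[G;U1,U2,U3]]‖²` over `{G : ‖G‖₀ ≤ α}`. -/
theorem core_subproblem_solution {r1 r2 r3 n1 n2 n3 : ℕ}
    (V S : Fin n1 × Fin n2 × Fin n3 → ℂ)
    (G0 : Fin r1 × Fin r2 × Fin r3 → ℂ)
    (η : ℝ) (hη : 0 < η) (α : ℕ)
    (U1 : Matrix (Fin n1) (Fin r1) ℂ) (U2 : Matrix (Fin n2) (Fin r2) ℂ)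
    (U3 : Matrix (Fin n3) (Fin r3) ℂ)
    (h1 : U1ᴴ * U1 = 1) (h2 : U2ᴴ * U2 = 1) (h3 : U3ᴴ * U3 = 1)
    (A : Fin r1 × Fin r2 × Fin r3 → ℂ)
    (hA : ∀ i, A i = ((η : ℂ) * tucker (fun a => V a - S a) U1ᴴ U2ᴴ U3ᴴ i + G0 i) / ((η : ℂ) + 1))
    (Ghat : Fin r1 × Fin r2 × Fin r3 → ℂ)
    (hGhat : IsTopThresh α A Ghat) :
    l0 Ghat ≤ α ∧
      ∀ G : Fin r1 × Fin r2 × Fin r3 → ℂ, l0 G ≤ α →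
        (1 / 2) * ∑ i, ‖Ghat i - G0 i‖ ^ 2
            + (η / 2) * ∑ a, ‖V a - S a - tucker Ghat U1 U2 U3 a‖ ^ 2
          ≤ (1 / 2) * ∑ i, ‖G i - G0 i‖ ^ 2
            + (η / 2) * ∑ a, ‖V a - S a - tucker G U1 U2 U3 a‖ ^ 2 := by
  set K := U1 ⊗ₖ (U2 ⊗ₖ U3) with hK_def
  have hK : Kᴴ * K = 1 := by
    rw [hK_def, conjTranspose_kronecker, conjTranspose_kronecker, ← mul_kronecker_mul,
      ← mul_kronecker_mul, h1, h2, h3, one_kronecker_one, one_kronecker_one]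
  have hAK : ∀ i, ((η : ℂ) + 1) * A i = η * (Kᴴ *ᵥ fun a => V a - S a) i + G0 i := by
    have hη' : (η : ℂ) + 1 ≠ 0 := by exact_mod_cast (by linarith : η + 1 ≠ 0)
    intro i
    rw [hA, hK_def, conjTranspose_kronecker, conjTranspose_kronecker,
      ← tucker_eq_kronecker_mulVec]
    field_simp
  refine ⟨hGhat.l0_le, fun G hG => ?_⟩
  simp only [tucker_eq_kronecker_mulVec]
  rw [proximal_objective_mulVec_eq hK _ η hAK, proximal_objective_mulVec_eq hK _ η hAK]
  gcongr _ * ?_ + _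
  exact hGhat.sum_norm_sub_sq_le hG
end

section
/- Let N ≥ 1, a, b ∈ ℂᴺ, η > 0 and α ∈ ℕ. Set B = (η·b + a)/(η + 1). Then any top-α hard thresholding Ŝ of B minimizes S ↦ (1/2)‖S − a‖² + (η/2)‖b − S‖² over the set {S ∈ ℂᴺ : ‖S‖₀ ≤ α}. -/
open scoped BigOperators
open Classical

/-! Completing the square coordinatewise turns the objective into `((η + 1)/2)‖S - B‖²` plus a
constant, so the problem is best `α`-sparse approximation of `B`. An `α`-sparse `S` pays at least
`∑_{i ∉ supp S} ‖B i‖²`, with equality when `S = B` on its support, and this is smallest when the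
support carries `α` largest entries of `B`: exactly what thresholding achieves. -/

open Finset

lemma sq_norm_sub_add_mul_sq_norm_sub (η : ℝ) (hη : η + 1 ≠ 0) (a b s : ℂ) :
    ‖s - a‖ ^ 2 + η * ‖b - s‖ ^ 2
      = (η + 1) * ‖s - ((η : ℂ) * b + a) / ((η : ℂ) + 1)‖ ^ 2 + η / (η + 1) * ‖a - b‖ ^ 2 := by
  simp only [Complex.sq_norm, Complex.normSq_apply, Complex.sub_re, Complex.sub_im,
    Complex.div_re, Complex.div_im, Complex.add_re, Complex.add_im, Complex.mul_re,
    Complex.mul_im, Complex.ofReal_re, Complex.ofReal_im, Complex.one_re, Complex.one_im]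
  field_simp
  ring

/-- Exchange argument: `s \ t` is no larger than `t \ s`, and each of its elements weighs at most
the lightest element of `t \ s`. -/
lemma Finset.sum_le_sum_of_card_le_of_forall_le {ι : Type*} [DecidableEq ι] {w : ι → ℝ}
    (hw : ∀ i, 0 ≤ w i) {s t : Finset ι} (hcard : #s ≤ #t)
    (htop : ∀ i ∈ t, ∀ j ∉ t, w j ≤ w i) :
    ∑ j ∈ s, w j ≤ ∑ j ∈ t, w j := by
  have hdiff : #(s \ t) ≤ #(t \ s) := card_sdiff_le_card_sdiff_iff.mpr hcard
  have hkey : ∑ j ∈ s \ t, w j ≤ ∑ j ∈ t \ s, w j := by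
    rcases (t \ s).eq_empty_or_nonempty with hempty | hne
    · rw [hempty, card_empty, Nat.le_zero, card_eq_zero] at hdiff
      simp [hdiff, hempty]
    obtain ⟨i₀, hi₀, hmin⟩ := exists_min_image (t \ s) w hne
    calc ∑ j ∈ s \ t, w j ≤ #(s \ t) • w i₀ :=
          sum_le_card_nsmul _ _ _ fun j hj => htop i₀ (mem_sdiff.1 hi₀).1 j (mem_sdiff.1 hj).2
      _ ≤ #(t \ s) • w i₀ := nsmul_le_nsmul_left (hw i₀) hdiff
      _ ≤ ∑ j ∈ t \ s, w j := card_nsmul_le_sum _ _ _ hmin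
  calc ∑ j ∈ s, w j = ∑ j ∈ s ∩ t, w j + ∑ j ∈ s \ t, w j := (sum_inter_add_sum_sdiff s t w).symm
    _ ≤ ∑ j ∈ t ∩ s, w j + ∑ j ∈ t \ s, w j := by rw [inter_comm]; gcongr
    _ = ∑ j ∈ t, w j := sum_inter_add_sum_sdiff t s w

section Thresholding

variable {ι : Type*} [Fintype ι]

lemma sum_compl_support_sq_norm_le {E : Type*} [SeminormedAddCommGroup E] (S B : ι → E) :
    ∑ i ∈ (univ.filter fun i => S i ≠ 0)ᶜ, ‖B i‖ ^ 2 ≤ ∑ i, ‖S i - B i‖ ^ 2 := by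
  calc ∑ i ∈ (univ.filter fun i => S i ≠ 0)ᶜ, ‖B i‖ ^ 2
        = ∑ i ∈ (univ.filter fun i => S i ≠ 0)ᶜ, ‖S i - B i‖ ^ 2 :=
        sum_congr rfl fun i hi => by simp_all
    _ ≤ ∑ i, ‖S i - B i‖ ^ 2 :=
        sum_le_sum_of_subset_of_nonneg (subset_univ _) fun i _ _ => by positivity

namespace IsTopThresh

variable {α : ℕ} {B Shat : ι → ℂ}

lemma l0_le_s5 (h : IsTopThresh α B Shat) : l0 Shat ≤ α := by
  obtain ⟨I, hIcard, -, hShat⟩ := h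
  have hsupp : (univ.filter fun i => Shat i ≠ 0) ⊆ I := fun i hi => by
    by_contra hiI
    simp_all
  calc l0 Shat ≤ #I := card_le_card hsupp
    _ ≤ α := hIcard ▸ min_le_left _ _

lemma sum_sq_norm_sub_le (h : IsTopThresh α B Shat) {S : ι → ℂ} (hS : l0 S ≤ α) :
    ∑ i, ‖Shat i - B i‖ ^ 2 ≤ ∑ i, ‖S i - B i‖ ^ 2 := by
  obtain ⟨I, hIcard, hItop, hShat⟩ := h
  have hcard : #(univ.filter fun i => S i ≠ 0) ≤ #I := by
    rw [hIcard]
    exact le_min hS (card_le_univ _)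
  have hexact : ∑ i, ‖Shat i - B i‖ ^ 2 = ∑ i ∈ Iᶜ, ‖B i‖ ^ 2 := by
    rw [← sum_compl_add_sum I, add_eq_left.2 (sum_eq_zero fun i hi => by simp [hShat, hi])]
    exact sum_congr rfl fun i hi => by simp_all
  have htop : ∑ i ∈ (univ.filter fun i => S i ≠ 0), ‖B i‖ ^ 2 ≤ ∑ i ∈ I, ‖B i‖ ^ 2 :=
    sum_le_sum_of_card_le_of_forall_le (fun _ => by positivity) hcard
      fun i hi j hj => pow_le_pow_left₀ (norm_nonneg _) (hItop i hi j hj) 2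
  have := sum_compl_support_sq_norm_le S B
  rw [hexact]
  linarith [sum_compl_add_sum I fun i => ‖B i‖ ^ 2,
    sum_compl_add_sum (univ.filter fun i => S i ≠ 0) fun i => ‖B i‖ ^ 2]

end IsTopThresh

end Thresholding

theorem sparse_subproblem_solution_general {N : ℕ}
    (a b : Fin N → ℂ) (η : ℝ) (hη : 0 < η) (α : ℕ)
    (B : Fin N → ℂ) (hB : ∀ i, B i = ((η : ℂ) * b i + a i) / ((η : ℂ) + 1))
    (Shat : Fin N → ℂ) (hShat : IsTopThresh α B Shat) :
    l0 Shat ≤ α ∧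
      ∀ S : Fin N → ℂ, l0 S ≤ α →
        (1 / 2) * ∑ i, ‖Shat i - a i‖ ^ 2
            + (η / 2) * ∑ i, ‖b i - Shat i‖ ^ 2
          ≤ (1 / 2) * ∑ i, ‖S i - a i‖ ^ 2
            + (η / 2) * ∑ i, ‖b i - S i‖ ^ 2 := by
  refine ⟨hShat.l0_le_s5, fun S hS => ?_⟩
  have complete_square : ∀ X : Fin N → ℂ,
      ∑ i, ‖X i - a i‖ ^ 2 + η * ∑ i, ‖b i - X i‖ ^ 2
        = (η + 1) * ∑ i, ‖X i - B i‖ ^ 2 + η / (η + 1) * ∑ i, ‖a i - b i‖ ^ 2 := fun X => by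
    simp only [mul_sum, ← sum_add_distrib, hB]
    exact sum_congr rfl fun i _ => sq_norm_sub_add_mul_sq_norm_sub η (by positivity) _ _ _
  have hmin : (η + 1) * ∑ i, ‖Shat i - B i‖ ^ 2 ≤ (η + 1) * ∑ i, ‖S i - B i‖ ^ 2 :=
    mul_le_mul_of_nonneg_left (hShat.sum_sq_norm_sub_le hS) (by positivity)
  linarith [complete_square Shat, complete_square S]

/-- Closed-form solution of the sparse-tensor subproblem of the APBCD algorithm:
with `B = (η·b + a)/(η + 1)`, any top-`α` hard thresholding `Ŝ` of `B` minimizes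
`S ↦ (1/2)‖S − a‖² + (η/2)‖b − S‖²` over `{S : ‖S‖₀ ≤ α}`. -/
theorem sparse_subproblem_solution {N : ℕ} (hN : 1 ≤ N)
    (a b : Fin N → ℂ) (η : ℝ) (hη : 0 < η) (α : ℕ)
    (B : Fin N → ℂ) (hB : ∀ i, B i = ((η : ℂ) * b i + a i) / ((η : ℂ) + 1))
    (Shat : Fin N → ℂ) (hShat : IsTopThresh α B Shat) :
    l0 Shat ≤ α ∧
      ∀ S : Fin N → ℂ, l0 S ≤ α →
        (1 / 2) * ∑ i, ‖Shat i - a i‖ ^ 2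
            + (η / 2) * ∑ i, ‖b i - Shat i‖ ^ 2
          ≤ (1 / 2) * ∑ i, ‖S i - a i‖ ^ 2
            + (η / 2) * ∑ i, ‖b i - S i‖ ^ 2 :=
  sparse_subproblem_solution_general a b η hη α B hB Shat hShat
end

section
/- Let β > 0 and let Gᵏ, Sᵏ (tensors) and Uᵢᵏ, Ūᵢᵏ (matrices, i = 1,2,3) be sequences in finite-dimensional complex normed spaces satisfying Ūᵢᵏ⁺¹ = Uᵢᵏ⁺¹ + β(Uᵢᵏ⁺¹ − Ūᵢᵏ) for all k. Let hᵏ be a nonincreasing real sequence with limit H*, and suppose: (a) there is ρ1 > 0 with ρ1·[ Σ_{i=1}^{3}(‖Uᵢᵏ − Ūᵢᵏ‖² + ‖Uᵢᵏ⁺¹ − Ūᵢᵏ⁺¹‖²) + ‖Sᵏ⁺¹ − Sᵏ‖² + ‖Gᵏ⁺¹ − Gᵏ‖² ] ≤ hᵏ − hᵏ⁺¹ for all k; (b) there are ρ2 > 0, an integer l ≥ 0, η̄ ∈ (0,∞] and a function φ : [0,η̄) → [0,∞) that is continuous, concave, continuously differentiable on (0,η̄) with φ′ > 0 and φ(0)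 = 0, such that for all k > l one has hᵏ − H* < η̄ and, whenever hᵏ > H*, φ′(hᵏ − H*)·ρ2·( ‖Gᵏ − Gᵏ⁻¹‖ + ‖Sᵏ − Sᵏ⁻¹‖ + Σ_{i=1}^{3}‖Ūᵢᵏ − Uᵢᵏ‖ ) ≥ 1. Then Σ_{k=0}^{∞} ( ‖Gᵏ⁺¹ − Gᵏ‖ + ‖Sᵏ⁺¹ − Sᵏ‖ + Σ_{i=1}^{3}‖Uᵢᵏ⁺¹ − Uᵢᵏ‖ ) < ∞; in particular the sequence Xᵏ = (Gᵏ, U1ᵏ, U2ᵏ, U3ᵏ, Sᵏ) is a Cauchy sequence and converges. -/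
/-!
Attouch–Bolte argument. Let `rₖ` be the norm of the explicit subgradient of `H` at step `k`.
Sufficient decrease gives `rₖ₊₁² ≲ hₖ - hₖ₊₁`, concavity of `φ` gives
`φ'(hₖ - H*) (hₖ - hₖ₊₁) ≤ Δₖ := φ(hₖ - H*) - φ(hₖ₊₁ - H*)`, and the KL inequality gives
`1 ≤ ρ₂ φ'(hₖ - H*) rₖ`; hence `rₖ₊₁² ≲ rₖ Δₖ` and, by AM–GM, `2 rₖ₊₁ ≤ rₖ + C Δₖ`. The `Δₖ`
telescope, so `(rₖ)` is summable. Finally the extrapolation rule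
`Uᵏ⁺¹ - Ūᵏ = β⁻¹ (Ūᵏ⁺¹ - Uᵏ⁺¹)` bounds each step length by `rₖ + (1 + β⁻¹) rₖ₊₁`.
-/

open scoped ENNReal
open Filter Topology

theorem ConcaveOn.mul_sub_le_sub_of_hasDerivAt {s : Set ℝ} {f : ℝ → ℝ} {f' x y : ℝ}
    (hf : ConcaveOn ℝ s f) (hx : x ∈ s) (hy : y ∈ s) (hxy : x ≤ y) (hf' : HasDerivAt f f' y) :
    f' * (y - x) ≤ f y - f x := by
  rcases hxy.eq_or_lt with rfl | hlt
  · simp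
  have hslope := hf.le_slope_of_hasDerivAt hx hy hlt hf'
  rwa [slope_def_field, le_div_iff₀ (sub_pos.2 hlt)] at hslope

theorem summable_of_succ_le_mul_add_sub {c d : ℕ → ℝ} {θ : ℝ} (hθ₀ : 0 ≤ θ) (hθ₁ : θ < 1)
    (hc : ∀ n, 0 ≤ c n) (hd : ∀ n, 0 ≤ d n)
    (hrec : ∀ n, c (n + 1) ≤ θ * c n + (d n - d (n + 1))) : Summable c := by
  refine (summable_nat_add_iff 1).1 <|
    summable_of_sum_range_le (c := (θ * c 0 + d 0) / (1 - θ)) (fun n => hc _) fun N => ?_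
  have htel : ∑ n ∈ Finset.range N, c (n + 1) ≤ θ * ∑ n ∈ Finset.range N, c n + (d 0 - d N) := by
    calc ∑ n ∈ Finset.range N, c (n + 1)
        ≤ ∑ n ∈ Finset.range N, (θ * c n + (d n - d (n + 1))) := Finset.sum_le_sum fun n _ => hrec n
      _ = θ * ∑ n ∈ Finset.range N, c n + (d 0 - d N) := by
        rw [Finset.sum_add_distrib, Finset.mul_sum, Finset.sum_range_sub']
  have hshift : ∑ n ∈ Finset.range N, c n ≤ c 0 + ∑ n ∈ Finset.range N, c (n + 1) := by
    calc ∑ n ∈ Finset.range N, c n ≤ ∑ n ∈ Finset.range (N + 1), c n :=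
          Finset.sum_le_sum_of_subset_of_nonneg (Finset.range_subset_range.2 N.le_succ)
            fun n _ _ => hc n
      _ = c 0 + ∑ n ∈ Finset.range N, c (n + 1) := by rw [Finset.sum_range_succ', add_comm]
  rw [le_div_iff₀ (sub_pos.2 hθ₁)]
  nlinarith [hd N]

theorem two_mul_le_add_of_kl_step {a b rₖ rₖ₁ x y φ'y D : ℝ} (ha : 0 < a) (hb : 0 ≤ b)
    (hrₖ : 0 ≤ rₖ) (hφ'y : 0 < φ'y) (hdec : a * rₖ₁ ^ 2 ≤ y - x) (hconc : φ'y * (y - x) ≤ D)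
    (hKL : 1 ≤ φ'y * (b * rₖ)) :
    2 * rₖ₁ ≤ rₖ + b / a * D := by
  have hxy : 0 ≤ y - x := le_trans (by positivity) hdec
  have hD : 0 ≤ D := (mul_nonneg hφ'y.le hxy).trans hconc
  refine two_mul_le_add_of_sq_le_mul hrₖ (mul_nonneg (div_nonneg hb ha.le) hD) ?_
  rw [← mul_le_mul_iff_of_pos_left ha]
  calc a * rₖ₁ ^ 2 ≤ (φ'y * (b * rₖ)) * (y - x) := by nlinarith
    _ = b * rₖ * (φ'y * (y - x)) := by ring
    _ ≤ b * rₖ * D := by gcongr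
    _ = a * (rₖ * (b / a * D)) := by field_simp

theorem summable_of_sufficient_decrease_of_kl {r h : ℕ → ℝ} {φ φ' : ℝ → ℝ} {s : Set ℝ}
    {Hstar a b : ℝ} {l : ℕ} (ha : 0 < a) (hb : 0 ≤ b) (hr : ∀ k, 0 ≤ r k)
    (hmono : Antitone h) (hlim : Tendsto h atTop (𝓝 Hstar))
    (hdec : ∀ k, a * r (k + 1) ^ 2 ≤ h k - h (k + 1))
    (hs0 : (0 : ℝ) ∈ s) (hφ0 : φ 0 = 0) (hφconc : ConcaveOn ℝ s φ)
    (hφderiv : ∀ t ∈ s, 0 < t → HasDerivAt φ (φ' t) t) (hφ'pos : ∀ t ∈ s, 0 < t → 0 < φ' t)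
    (hsmall : ∀ k, l < k → h k - Hstar ∈ s)
    (hKL : ∀ k, l < k → Hstar < h k → 1 ≤ φ' (h k - Hstar) * (b * r k)) :
    Summable r := by
  have hge : ∀ k, Hstar ≤ h k := hmono.le_of_tendsto hlim
  have hφ_nonneg : ∀ k, l < k → 0 ≤ φ (h k - Hstar) := by
    intro k hk
    rcases (sub_nonneg.2 (hge k)).eq_or_lt with ht | ht
    · rw [← ht, hφ0]
    · have hconc := hφconc.mul_sub_le_sub_of_hasDerivAt hs0 (hsmall k hk) ht.le
        (hφderiv _ (hsmall k hk) ht)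
      rw [hφ0, sub_zero, sub_zero] at hconc
      exact (mul_pos (hφ'pos _ (hsmall k hk) ht) ht).le.trans hconc
  have hstep : ∀ k, l < k →
      2 * r (k + 1) ≤ r k + b / a * (φ (h k - Hstar) - φ (h (k + 1) - Hstar)) := by
    intro k hk
    have hanti : h (k + 1) ≤ h k := hmono k.le_succ
    rcases (hge k).eq_or_lt with hstat | hlt
    · -- `h` has reached `Hstar`, so sufficient decrease forces `r (k + 1) = 0`
      have hnext : h (k + 1) = h k := le_antisymm hanti (hstat ▸ hge (k + 1))
      have hzero := hdec k
      rw [hnext, sub_self] at hzero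
      rw [(sq_nonpos_iff _).1 (nonpos_of_mul_nonpos_right hzero ha), hnext, sub_self, mul_zero,
        mul_zero, add_zero]
      exact hr k
    · have hpos : 0 < h k - Hstar := sub_pos.2 hlt
      exact two_mul_le_add_of_kl_step ha hb (hr k) (hφ'pos _ (hsmall k hk) hpos)
        (by linarith [hdec k])
        (hφconc.mul_sub_le_sub_of_hasDerivAt (hsmall (k + 1) (by omega)) (hsmall k hk)
          (by linarith) (hφderiv _ (hsmall k hk) hpos))
        (hKL k hk hlt)
  refine (summable_nat_add_iff (l + 1)).1 <| summable_of_succ_le_mul_add_sub (θ := 1 / 2)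
    (d := fun n => b / a / 2 * φ (h (n + (l + 1)) - Hstar)) (by norm_num) (by norm_num)
    (fun n => hr _) (fun n => mul_nonneg (by positivity) (hφ_nonneg _ (by omega))) fun n => ?_
  have hstep_n := hstep (n + (l + 1)) (by omega)
  simp only [add_right_comm n 1 (l + 1)]
  linarith

theorem norm_succ_sub_le_of_extrapolation {E : Type*} [NormedAddCommGroup E] [NormedSpace ℝ E]
    {β : ℝ} (hβ : 0 < β) {U Ub : ℕ → E}
    (hext : ∀ k, Ub (k + 1) = U (k + 1) + β • (U (k + 1) - Ub k)) (k : ℕ) :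
    ‖U (k + 1) - U k‖ ≤ β⁻¹ * ‖Ub (k + 1) - U (k + 1)‖ + ‖Ub k - U k‖ := by
  have hstep : ‖U (k + 1) - Ub k‖ = β⁻¹ * ‖Ub (k + 1) - U (k + 1)‖ := by
    rw [hext k, add_sub_cancel_left, norm_smul, Real.norm_of_nonneg hβ.le,
      inv_mul_cancel_left₀ hβ.ne']
  calc ‖U (k + 1) - U k‖ = ‖(U (k + 1) - Ub k) + (Ub k - U k)‖ := by rw [sub_add_sub_cancel]
    _ ≤ _ := hstep ▸ norm_add_le _ _

theorem sq_add_five_le (a b c d e : ℝ) :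
    (a + b + c + d + e) ^ 2 ≤ 5 * (a ^ 2 + b ^ 2 + c ^ 2 + d ^ 2 + e ^ 2) := by
  nlinarith [sq_nonneg (a - b), sq_nonneg (a - c), sq_nonneg (a - d), sq_nonneg (a - e),
    sq_nonneg (b - c), sq_nonneg (b - d), sq_nonneg (b - e), sq_nonneg (c - d), sq_nonneg (c - e),
    sq_nonneg (d - e)]

theorem Prod.norm_le_norm_fst_add_norm_snd {E F : Type*} [SeminormedAddCommGroup E]
    [SeminormedAddCommGroup F] (x : E × F) : ‖x‖ ≤ ‖x.1‖ + ‖x.2‖ :=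
  max_le_add_of_nonneg (norm_nonneg _) (norm_nonneg _)

section Iterates

variable {EG ES E1 E2 E3 : Type*} [NormedAddCommGroup EG] [NormedAddCommGroup ES]
  [NormedAddCommGroup E1] [NormedAddCommGroup E2] [NormedAddCommGroup E3]
  (G : ℕ → EG) (S : ℕ → ES) (U1 Ub1 : ℕ → E1) (U2 Ub2 : ℕ → E2) (U3 Ub3 : ℕ → E3)

/-- The norm of the element of `∂H(Xᵏ)` exhibited in Lemma 2 (for `k = 0` the truncated `k - 1`
makes the first two terms vanish). -/
def apbcdResidual (k : ℕ) : ℝ :=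
  ‖G k - G (k - 1)‖ + ‖S k - S (k - 1)‖ + ‖Ub1 k - U1 k‖ + ‖Ub2 k - U2 k‖ + ‖Ub3 k - U3 k‖

theorem apbcdResidual_nonneg (k : ℕ) : 0 ≤ apbcdResidual G S U1 Ub1 U2 Ub2 U3 Ub3 k := by
  unfold apbcdResidual
  positivity

theorem sq_apbcdResidual_succ_le (k : ℕ) :
    apbcdResidual G S U1 Ub1 U2 Ub2 U3 Ub3 (k + 1) ^ 2 ≤
      5 * (‖U1 (k + 1) - Ub1 (k + 1)‖ ^ 2 + ‖U2 (k + 1) - Ub2 (k + 1)‖ ^ 2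
        + ‖U3 (k + 1) - Ub3 (k + 1)‖ ^ 2 + ‖S (k + 1) - S k‖ ^ 2 + ‖G (k + 1) - G k‖ ^ 2) := by
  have hsq := sq_add_five_le ‖G (k + 1) - G k‖ ‖S (k + 1) - S k‖ ‖U1 (k + 1) - Ub1 (k + 1)‖
    ‖U2 (k + 1) - Ub2 (k + 1)‖ ‖U3 (k + 1) - Ub3 (k + 1)‖
  simp only [apbcdResidual, Nat.add_sub_cancel, norm_sub_rev (Ub1 _), norm_sub_rev (Ub2 _),
    norm_sub_rev (Ub3 _)]
  linarith

theorem norm_steps_le_apbcdResidual [NormedSpace ℝ E1] [NormedSpace ℝ E2] [NormedSpace ℝ E3]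
    {β : ℝ} (hβ : 0 < β)
    (hext1 : ∀ k, Ub1 (k + 1) = U1 (k + 1) + β • (U1 (k + 1) - Ub1 k))
    (hext2 : ∀ k, Ub2 (k + 1) = U2 (k + 1) + β • (U2 (k + 1) - Ub2 k))
    (hext3 : ∀ k, Ub3 (k + 1) = U3 (k + 1) + β • (U3 (k + 1) - Ub3 k)) (k : ℕ) :
    ‖G (k + 1) - G k‖ + ‖S (k + 1) - S k‖
        + ‖U1 (k + 1) - U1 k‖ + ‖U2 (k + 1) - U2 k‖ + ‖U3 (k + 1) - U3 k‖ ≤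
      (1 + β⁻¹) * apbcdResidual G S U1 Ub1 U2 Ub2 U3 Ub3 (k + 1)
        + apbcdResidual G S U1 Ub1 U2 Ub2 U3 Ub3 k := by
  have hU1 := norm_succ_sub_le_of_extrapolation hβ hext1 k
  have hU2 := norm_succ_sub_le_of_extrapolation hβ hext2 k
  have hU3 := norm_succ_sub_le_of_extrapolation hβ hext3 k
  have hβ' : 0 ≤ β⁻¹ := inv_nonneg.2 hβ.le
  simp only [apbcdResidual, Nat.add_sub_cancel]
  linarith [mul_nonneg hβ' (norm_nonneg (G (k + 1) - G k)),
    mul_nonneg hβ' (norm_nonneg (S (k + 1) - S k)), norm_nonneg (G k - G (k - 1)),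
    norm_nonneg (S k - S (k - 1)), norm_nonneg (Ub1 (k + 1) - U1 (k + 1)),
    norm_nonneg (Ub2 (k + 1) - U2 (k + 1)), norm_nonneg (Ub3 (k + 1) - U3 (k + 1))]

theorem dist_iterates_succ_le (k : ℕ) :
    dist (G k, U1 k, U2 k, U3 k, S k) (G (k + 1), U1 (k + 1), U2 (k + 1), U3 (k + 1), S (k + 1)) ≤
      ‖G (k + 1) - G k‖ + ‖S (k + 1) - S k‖
        + ‖U1 (k + 1) - U1 k‖ + ‖U2 (k + 1) - U2 k‖ + ‖U3 (k + 1) - U3 k‖ := by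
  rw [dist_comm, dist_eq_norm]
  calc ‖(G (k + 1), U1 (k + 1), U2 (k + 1), U3 (k + 1), S (k + 1)) - (G k, U1 k, U2 k, U3 k, S k)‖
      ≤ ‖G (k + 1) - G k‖ + (‖U1 (k + 1) - U1 k‖ + (‖U2 (k + 1) - U2 k‖
          + (‖U3 (k + 1) - U3 k‖ + ‖S (k + 1) - S k‖))) := by
        refine (Prod.norm_le_norm_fst_add_norm_snd _).trans (add_le_add le_rfl ?_)
        refine (Prod.norm_le_norm_fst_add_norm_snd _).trans (add_le_add le_rfl ?_)
        refine (Prod.norm_le_norm_fst_add_norm_snd _).trans (add_le_add le_rfl ?_)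
        exact Prod.norm_le_norm_fst_add_norm_snd _
    _ = _ := by ring

end Iterates

theorem apbcd_finite_length_and_convergence_general
    {EG ES E1 E2 E3 : Type*}
    [NormedAddCommGroup EG] [NormedSpace ℂ EG] [FiniteDimensional ℂ EG]
    [NormedAddCommGroup ES] [NormedSpace ℂ ES] [FiniteDimensional ℂ ES]
    [NormedAddCommGroup E1] [NormedSpace ℂ E1] [FiniteDimensional ℂ E1]
    [NormedAddCommGroup E2] [NormedSpace ℂ E2] [FiniteDimensional ℂ E2]
    [NormedAddCommGroup E3] [NormedSpace ℂ E3] [FiniteDimensional ℂ E3]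
    (β : ℝ) (hβ : 0 < β)
    (G : ℕ → EG) (S : ℕ → ES)
    (U1 Ub1 : ℕ → E1) (U2 Ub2 : ℕ → E2) (U3 Ub3 : ℕ → E3)
    (hext1 : ∀ k, Ub1 (k+1) = U1 (k+1) + β • (U1 (k+1) - Ub1 k))
    (hext2 : ∀ k, Ub2 (k+1) = U2 (k+1) + β • (U2 (k+1) - Ub2 k))
    (hext3 : ∀ k, Ub3 (k+1) = U3 (k+1) + β • (U3 (k+1) - Ub3 k))
    (h : ℕ → ℝ) (Hstar : ℝ) (hmono : Antitone h) (hlim : Tendsto h atTop (𝓝 Hstar))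
    -- (a) sufficient decrease
    (ρ1 : ℝ) (hρ1 : 0 < ρ1)
    (hdec : ∀ k,
      ρ1 * ((‖U1 k - Ub1 k‖^2 + ‖U1 (k+1) - Ub1 (k+1)‖^2)
          + (‖U2 k - Ub2 k‖^2 + ‖U2 (k+1) - Ub2 (k+1)‖^2)
          + (‖U3 k - Ub3 k‖^2 + ‖U3 (k+1) - Ub3 (k+1)‖^2)
          + ‖S (k+1) - S k‖^2 + ‖G (k+1) - G k‖^2)
        ≤ h k - h (k+1))
    -- (b) the KL inequality along the iterates, via a desingularizing function φ on [0, η̄)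
    (ρ2 : ℝ) (hρ2 : 0 < ρ2) (l : ℕ) (ηbar : ℝ≥0∞) (hηbar : 0 < ηbar)
    (φ φ' : ℝ → ℝ)
    (hφ0 : φ 0 = 0)
    (hφconc : ConcaveOn ℝ {t : ℝ | 0 ≤ t ∧ ENNReal.ofReal t < ηbar} φ)
    (hφderiv : ∀ t : ℝ, 0 < t → ENNReal.ofReal t < ηbar → HasDerivAt φ (φ' t) t)
    (hφ'pos : ∀ t : ℝ, 0 < t → ENNReal.ofReal t < ηbar → 0 < φ' t)
    (hsmall : ∀ k, l < k → ENNReal.ofReal (h k - Hstar) < ηbar)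
    (hKL : ∀ k, l < k → Hstar < h k →
      1 ≤ φ' (h k - Hstar) * (ρ2 * (‖G k - G (k-1)‖ + ‖S k - S (k-1)‖
        + ‖Ub1 k - U1 k‖ + ‖Ub2 k - U2 k‖ + ‖Ub3 k - U3 k‖))) :
    Summable (fun k => ‖G (k+1) - G k‖ + ‖S (k+1) - S k‖
        + ‖U1 (k+1) - U1 k‖ + ‖U2 (k+1) - U2 k‖ + ‖U3 (k+1) - U3 k‖) ∧
    CauchySeq (fun k => (G k, U1 k, U2 k, U3 k, S k)) ∧
    ∃ X : EG × E1 × E2 × E3 × ES,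
      Tendsto (fun k => (G k, U1 k, U2 k, U3 k, S k)) atTop (𝓝 X) := by
  set r := apbcdResidual G S U1 Ub1 U2 Ub2 U3 Ub3
  have hdec_r : ∀ k, ρ1 / 5 * r (k + 1) ^ 2 ≤ h k - h (k + 1) := fun k => by
    nlinarith [hdec k, sq_apbcdResidual_succ_le G S U1 Ub1 U2 Ub2 U3 Ub3 k,
      sq_nonneg ‖U1 k - Ub1 k‖, sq_nonneg ‖U2 k - Ub2 k‖, sq_nonneg ‖U3 k - Ub3 k‖]
  have hr_summable : Summable r :=
    summable_of_sufficient_decrease_of_kl (s := {t | 0 ≤ t ∧ ENNReal.ofReal t < ηbar})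
      (by positivity) hρ2.le (apbcdResidual_nonneg _ _ _ _ _ _ _ _) hmono hlim hdec_r
      ⟨le_rfl, by simpa using hηbar⟩ hφ0 hφconc
      (fun t ht ht₀ => hφderiv t ht₀ ht.2) (fun t ht ht₀ => hφ'pos t ht₀ ht.2)
      (fun k hk => ⟨sub_nonneg.2 (hmono.le_of_tendsto hlim k), hsmall k hk⟩) hKL
  have hsteps : Summable fun k => ‖G (k+1) - G k‖ + ‖S (k+1) - S k‖
      + ‖U1 (k+1) - U1 k‖ + ‖U2 (k+1) - U2 k‖ + ‖U3 (k+1) - U3 k‖ :=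
    .of_nonneg_of_le (fun k => by positivity)
      (norm_steps_le_apbcdResidual G S U1 Ub1 U2 Ub2 U3 Ub3 hβ hext1 hext2 hext3)
      ((((summable_nat_add_iff 1).2 hr_summable).mul_left (1 + β⁻¹)).add hr_summable)
  have hcauchy : CauchySeq fun k => (G k, U1 k, U2 k, U3 k, S k) :=
    cauchySeq_of_dist_le_of_summable _ (dist_iterates_succ_le G S U1 U2 U3) hsteps
  exact ⟨hsteps, hcauchy, cauchySeq_tendsto_of_complete hcauchy⟩

/-- Theorem 1 (finite length and convergence): assume the inertial extrapolation relation,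
the sufficient-decrease inequality (Lemma 1) for a nonincreasing sequence `hᵏ → H*`, and the
Kurdyka–Łojasiewicz inequality along the iterates (combining Lemma 2 with a desingularizing
function `φ` on `[0, η̄)`, `η̄ ∈ (0,∞]`). Then the successive differences of the iterates are
summable; in particular `Xᵏ = (Gᵏ, U1ᵏ, U2ᵏ, U3ᵏ, Sᵏ)` is a Cauchy sequence and converges. -/
theorem apbcd_finite_length_and_convergence
    {EG ES E1 E2 E3 : Type*}
    [NormedAddCommGroup EG] [NormedSpace ℂ EG] [FiniteDimensional ℂ EG]
    [NormedAddCommGroup ES] [NormedSpace ℂ ES] [FiniteDimensional ℂ ES]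
    [NormedAddCommGroup E1] [NormedSpace ℂ E1] [FiniteDimensional ℂ E1]
    [NormedAddCommGroup E2] [NormedSpace ℂ E2] [FiniteDimensional ℂ E2]
    [NormedAddCommGroup E3] [NormedSpace ℂ E3] [FiniteDimensional ℂ E3]
    (β : ℝ) (hβ : 0 < β)
    (G : ℕ → EG) (S : ℕ → ES)
    (U1 Ub1 : ℕ → E1) (U2 Ub2 : ℕ → E2) (U3 Ub3 : ℕ → E3)
    (hext1 : ∀ k, Ub1 (k+1) = U1 (k+1) + β • (U1 (k+1) - Ub1 k))
    (hext2 : ∀ k, Ub2 (k+1) = U2 (k+1) + β • (U2 (k+1) - Ub2 k))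
    (hext3 : ∀ k, Ub3 (k+1) = U3 (k+1) + β • (U3 (k+1) - Ub3 k))
    (h : ℕ → ℝ) (Hstar : ℝ) (hmono : Antitone h) (hlim : Tendsto h atTop (𝓝 Hstar))
    -- (a) sufficient decrease
    (ρ1 : ℝ) (hρ1 : 0 < ρ1)
    (hdec : ∀ k,
      ρ1 * ((‖U1 k - Ub1 k‖^2 + ‖U1 (k+1) - Ub1 (k+1)‖^2)
          + (‖U2 k - Ub2 k‖^2 + ‖U2 (k+1) - Ub2 (k+1)‖^2)
          + (‖U3 k - Ub3 k‖^2 + ‖U3 (k+1) - Ub3 (k+1)‖^2)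
          + ‖S (k+1) - S k‖^2 + ‖G (k+1) - G k‖^2)
        ≤ h k - h (k+1))
    -- (b) the KL inequality along the iterates, via a desingularizing function φ on [0, η̄)
    (ρ2 : ℝ) (hρ2 : 0 < ρ2) (l : ℕ) (ηbar : ℝ≥0∞) (hηbar : 0 < ηbar)
    (φ φ' : ℝ → ℝ)
    (hφ0 : φ 0 = 0)
    (hφcont : ContinuousOn φ {t : ℝ | 0 ≤ t ∧ ENNReal.ofReal t < ηbar})
    (hφconc : ConcaveOn ℝ {t : ℝ | 0 ≤ t ∧ ENNReal.ofReal t < ηbar} φ)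
    (hφderiv : ∀ t : ℝ, 0 < t → ENNReal.ofReal t < ηbar → HasDerivAt φ (φ' t) t)
    (hφ'cont : ContinuousOn φ' {t : ℝ | 0 < t ∧ ENNReal.ofReal t < ηbar})
    (hφ'pos : ∀ t : ℝ, 0 < t → ENNReal.ofReal t < ηbar → 0 < φ' t)
    (hsmall : ∀ k, l < k → ENNReal.ofReal (h k - Hstar) < ηbar)
    (hKL : ∀ k, l < k → Hstar < h k →
      1 ≤ φ' (h k - Hstar) * (ρ2 * (‖G k - G (k-1)‖ + ‖S k - S (k-1)‖
        + ‖Ub1 k - U1 k‖ + ‖Ub2 k - U2 k‖ + ‖Ub3 k - U3 k‖))) :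
    Summable (fun k => ‖G (k+1) - G k‖ + ‖S (k+1) - S k‖
        + ‖U1 (k+1) - U1 k‖ + ‖U2 (k+1) - U2 k‖ + ‖U3 (k+1) - U3 k‖) ∧
    CauchySeq (fun k => (G k, U1 k, U2 k, U3 k, S k)) ∧
    ∃ X : EG × E1 × E2 × E3 × ES,
      Tendsto (fun k => (G k, U1 k, U2 k, U3 k, S k)) atTop (𝓝 X) :=
  apbcd_finite_length_and_convergence_general β hβ G S U1 Ub1 U2 Ub2 U3 Ub3 hext1 hext2 hext3 h
    Hstar hmono hlim ρ1 hρ1 hdec ρ2 hρ2 l ηbar hηbar φ φ' hφ0 hφconc hφderiv hφ'pos hsmall hKL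
end

section
/- Let n ≥ r ≥ 1 and let U ∈ ℂ^{n×r} satisfy UᴴU = I_r. Then there exist a matrix Q ∈ ℂ^{n×n} that is a product of at most (2n − r − 1)r/2 complex Givens rotation matrices G(i,j,η,θ) with 1 ≤ i < j ≤ n, and unimodular complex numbers d₁, …, d_r, such that U = Q·Ī·D, where Ī ∈ ℂ^{n×r} is the rectangular identity (Ī_{kk} = 1 for 1 ≤ k ≤ r and all other entries 0) and D = diag(d₁, …, d_r). In particular, U is determined by (2n − r − 1)r real rotation parameters together with r phases. -/
/-!
Givens rotations are unitary, so they perform a QR-style elimination that keeps the columns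
orthonormal. Column `k` is cleared below the diagonal by the `n - 1 - k` rotations in the planes
`(k, j)`, `j > k`; these mix only rows `≥ k`, where the already reduced earlier columns vanish.
Above the diagonal the entries vanish too, since an orthonormal column supported on a single row
forces the rest of that row to vanish. The result is `Ī·D` with `D` diagonal and unimodular, reached
with `∑_{k<r} (n - 1 - k) = (2n - r - 1) r / 2` rotations.
-/

open Matrix

/-- The complex Givens rotation matrix `G(i,j,η,θ) ∈ ℂ^{n×n}`: it agrees with the identity
except for the entries `G_{ii} = cos η`, `G_{ij} = e^{iθ} sin η`, `G_{ji} = −e^{−iθ} sin η`,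
`G_{jj} = cos η`. -/
noncomputable def givensMatrix {n : ℕ} (i j : Fin n) (η θ : ℝ) :
    Matrix (Fin n) (Fin n) ℂ :=
  Matrix.of fun a b =>
    if a = i ∧ b = i then (Real.cos η : ℂ)
    else if a = i ∧ b = j then Complex.exp ((θ : ℂ) * Complex.I) * (Real.sin η : ℂ)
    else if a = j ∧ b = i then -(Complex.exp (-(θ : ℂ) * Complex.I) * (Real.sin η : ℂ))
    else if a = j ∧ b = j then (Real.cos η : ℂ)
    else if a = b then 1 else 0

/-- The rectangular identity `Ī ∈ ℂ^{n×r}`: `Ī_{kk} = 1` for `1 ≤ k ≤ r`, all other entries `0`. -/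
def rectId (n r : ℕ) : Matrix (Fin n) (Fin r) ℂ :=
  Matrix.of fun a b => if (a : ℕ) = (b : ℕ) then 1 else 0

section Angles

open Complex

lemma exists_sin_mul_eq_cos_mul (x : ℝ) {y : ℝ} (hy : 0 ≤ y) :
    ∃ η ∈ Set.Icc 0 Real.pi, Real.sin η * x = Real.cos η * y := by
  set w : ℂ := ⟨x, y⟩
  refine ⟨arg w, ⟨arg_nonneg_iff.2 hy, arg_le_pi w⟩, ?_⟩
  rw [← show ‖w‖ * Real.cos (arg w) = x from norm_mul_cos_arg w,
    ← show ‖w‖ * Real.sin (arg w) = y from norm_mul_sin_arg w]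
  ring

lemma exists_mem_Ico_exp_neg_mul_I_eq (θ₀ : ℝ) :
    ∃ θ ∈ Set.Ico 0 (2 * Real.pi), exp (-θ * I) = exp (-θ₀ * I) := by
  refine ⟨toIcoMod Real.two_pi_pos 0 θ₀, toIcoMod_mem_Ico' _ _, ?_⟩
  have hθ₀ : (θ₀ : ℂ) - toIcoMod Real.two_pi_pos 0 θ₀ =
      toIcoDiv Real.two_pi_pos 0 θ₀ * (2 * Real.pi) := by
    exact_mod_cast self_sub_toIcoMod_eq_mul Real.two_pi_pos 0 θ₀
  exact exp_eq_exp_iff_exists_int.2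
    ⟨toIcoDiv Real.two_pi_pos 0 θ₀, by linear_combination I * hθ₀⟩

/-- In polar form `a = ‖a‖ e^{iα}`, `b = ‖b‖ e^{iβ}`: the phase `θ = α - β - π` turns `a` into
`-‖a‖ e^{iβ}`, and `η` balances the moduli, `sin η ‖a‖ = cos η ‖b‖`. -/
lemma exists_givens_angles (a b : ℂ) :
    ∃ η ∈ Set.Icc 0 Real.pi, ∃ θ ∈ Set.Ico 0 (2 * Real.pi),
      exp (-θ * I) * Real.sin η * a + Real.cos η * b = 0 := by
  obtain ⟨η, hη, hsc⟩ := exists_sin_mul_eq_cos_mul ‖a‖ (norm_nonneg b)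
  obtain ⟨θ, hθ, hexp⟩ := exists_mem_Ico_exp_neg_mul_I_eq (arg a - arg b - Real.pi)
  refine ⟨η, hη, θ, hθ, ?_⟩
  have hphase :
      exp (-(arg a - arg b - Real.pi : ℝ) * I) * exp (arg a * I) = -exp (arg b * I) := by
    rw [← exp_add, show -(arg a - arg b - Real.pi : ℝ) * I + arg a * I = arg b * I + Real.pi * I by
      push_cast; ring, exp_add, exp_pi_mul_I, mul_neg_one]
  have hsc' : (Real.sin η : ℂ) * ‖a‖ = Real.cos η * ‖b‖ := by exact_mod_cast hsc
  rw [hexp]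
  linear_combination
    -(exp (-(arg a - arg b - Real.pi : ℝ) * I) * Real.sin η) * norm_mul_exp_arg_mul_I a -
      Real.cos η * norm_mul_exp_arg_mul_I b + (Real.sin η * ‖a‖ : ℂ) * hphase -
      exp (arg b * I) * hsc'

end Angles

section OrthonormalColumns

variable {m ι : Type*} [Fintype m] {W : Matrix m ι ℂ} {a : m} {c : ι}

lemma conjTranspose_mul_self_apply_of_forall_ne_eq_zero (hcol : ∀ b, b ≠ a → W b c = 0)
    (c' : ι) : (Wᴴ * W) c c' = star (W a c) * W a c' := by
  rw [mul_apply, Fintype.sum_eq_single a fun b hb => by simp [hcol b hb]]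
  rfl

lemma norm_apply_eq_one_of_forall_ne_eq_zero [DecidableEq ι] (hW : Wᴴ * W = 1)
    (hcol : ∀ b, b ≠ a → W b c = 0) : ‖W a c‖ = 1 := by
  have h := conjTranspose_mul_self_apply_of_forall_ne_eq_zero hcol c
  rw [hW, one_apply_eq, Complex.star_def, Complex.conj_mul'] at h
  have h' : ‖W a c‖ ^ 2 = 1 := by exact_mod_cast h.symm
  exact (pow_eq_one_iff_of_nonneg (norm_nonneg _) two_ne_zero).1 h'

lemma apply_eq_zero_of_forall_ne_eq_zero [DecidableEq ι] (hW : Wᴴ * W = 1)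
    (hcol : ∀ b, b ≠ a → W b c = 0) {c' : ι} (hc : c ≠ c') : W a c' = 0 := by
  have h := conjTranspose_mul_self_apply_of_forall_ne_eq_zero hcol c'
  rw [hW, one_apply_ne hc] at h
  have hac : star (W a c) ≠ 0 := by
    rw [star_ne_zero, ← norm_ne_zero_iff, norm_apply_eq_one_of_forall_ne_eq_zero hW hcol]
    exact one_ne_zero
  exact (mul_eq_zero.1 h.symm).resolve_left hac

end OrthonormalColumns

variable {n : ℕ}

lemma conjTranspose_givensMatrix_mul_apply {m : Type*} {i j : Fin n} (hij : i ≠ j) (η θ : ℝ)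
    (W : Matrix (Fin n) m ℂ) (a : Fin n) (k : m) :
    ((givensMatrix i j η θ)ᴴ * W) a k =
      if a = i then Real.cos η * W i k - Complex.exp (θ * Complex.I) * Real.sin η * W j k
      else if a = j then Complex.exp (-θ * Complex.I) * Real.sin η * W i k + Real.cos η * W j k
      else W a k := by
  rw [mul_apply]
  split_ifs with hai haj
  · subst hai
    rw [Fintype.sum_eq_add a j hij fun c hc => by simp [givensMatrix, hc.1, hc.2]]
    simp [givensMatrix, hij.symm, ← Complex.exp_conj, -Complex.ofReal_cos, -Complex.ofReal_sin]
    ring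
  · subst haj
    rw [Fintype.sum_eq_add i a hij fun c hc => by simp [givensMatrix, hc.1, hc.2]]
    simp [givensMatrix, hij.symm, ← Complex.exp_conj, -Complex.ofReal_cos, -Complex.ofReal_sin]
  · rw [Fintype.sum_eq_single a fun c hc => by simp [givensMatrix, hai, haj, hc]]
    simp [givensMatrix, hai, haj]

lemma givensMatrix_mem_unitaryGroup {i j : Fin n} (hij : i ≠ j) (η θ : ℝ) :
    givensMatrix i j η θ ∈ unitaryGroup (Fin n) ℂ := by
  rw [mem_unitaryGroup_iff']
  ext a b
  rw [star_eq_conjTranspose, conjTranspose_givensMatrix_mul_apply hij]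
  have hexp : Complex.exp (θ * Complex.I) * Complex.exp (-θ * Complex.I) = 1 := by
    rw [← Complex.exp_add]; simp
  have hpyth : (Real.cos η : ℂ) ^ 2 + (Real.sin η : ℂ) ^ 2 = 1 := by
    exact_mod_cast Real.cos_sq_add_sin_sq η
  simp only [givensMatrix, of_apply, one_apply]
  grind

def givensRotations (n : ℕ) : Set (Matrix (Fin n) (Fin n) ℂ) :=
  {A | ∃ (i j : Fin n) (η θ : ℝ), i < j ∧ η ∈ Set.Icc 0 Real.pi ∧
    θ ∈ Set.Ico 0 (2 * Real.pi) ∧ A = givensMatrix i j η θ}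

lemma givensRotations_subset_unitaryGroup : givensRotations n ⊆ unitaryGroup (Fin n) ℂ := by
  rintro _ ⟨i, j, η, θ, hij, -, -, -, rfl⟩
  exact givensMatrix_mem_unitaryGroup hij.ne η θ

def GivensReduces {ι : Type*} (N : ℕ) (U V : Matrix (Fin n) ι ℂ) : Prop :=
  ∃ L : List (Matrix (Fin n) (Fin n) ℂ),
    L.length ≤ N ∧ (∀ A ∈ L, A ∈ givensRotations n) ∧ U = L.prod * V

namespace GivensReduces

variable {ι : Type*} {N M : ℕ} {U V W : Matrix (Fin n) ι ℂ}

lemma refl (U : Matrix (Fin n) ι ℂ) : GivensReduces 0 U U :=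
  ⟨[], le_rfl, by simp, by simp⟩

lemma trans (hUV : GivensReduces N U V) (hVW : GivensReduces M V W) :
    GivensReduces (N + M) U W := by
  obtain ⟨L, hL, hLG, rfl⟩ := hUV
  obtain ⟨L', hL', hL'G, rfl⟩ := hVW
  refine ⟨L ++ L', by simp; omega, fun A hA => ?_, by rw [List.prod_append, Matrix.mul_assoc]⟩
  rcases List.mem_append.1 hA with hA | hA
  exacts [hLG A hA, hL'G A hA]

lemma conjTranspose_mul {G : Matrix (Fin n) (Fin n) ℂ} (hG : G ∈ givensRotations n)
    (V : Matrix (Fin n) ι ℂ) : GivensReduces 1 V (Gᴴ * V) := by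
  refine ⟨[G], le_rfl, by simpa using hG, ?_⟩
  rw [List.prod_singleton, ← Matrix.mul_assoc, ← star_eq_conjTranspose,
    Unitary.mul_star_self_of_mem (givensRotations_subset_unitaryGroup hG), Matrix.one_mul]

lemma conjTranspose_mul_self_eq [Fintype ι] (h : GivensReduces N U V) : Vᴴ * V = Uᴴ * U := by
  obtain ⟨L, -, hLG, rfl⟩ := h
  have hL : L.prod ∈ unitaryGroup (Fin n) ℂ :=
    Submonoid.list_prod_mem _ fun A hA => givensRotations_subset_unitaryGroup (hLG A hA)
  rw [Matrix.conjTranspose_mul, Matrix.mul_assoc, ← Matrix.mul_assoc L.prodᴴ,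
    ← star_eq_conjTranspose, Unitary.star_mul_self_of_mem hL, Matrix.one_mul]

end GivensReduces

variable {r : ℕ}

def FirstColsDiagonal (k : ℕ) (V : Matrix (Fin n) (Fin r) ℂ) : Prop :=
  ∀ (a : Fin n) (m : Fin r), (m : ℕ) < k → (a : ℕ) ≠ m → V a m = 0

lemma exists_givensReduces_clear_below (k : Fin r) {V : Matrix (Fin n) (Fin r) ℂ}
    (hV : FirstColsDiagonal k V) :
    ∀ t, (k : ℕ) + t < n → ∃ W, GivensReduces t V W ∧ FirstColsDiagonal k W ∧
      ∀ a : Fin n, (k : ℕ) < a → (a : ℕ) ≤ k + t → W a k = 0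
  | 0, _ => ⟨V, .refl V, hV, fun _ _ h => absurd h (by omega)⟩
  | t + 1, ht => by
    obtain ⟨W, hVW, hW, hbelow⟩ := exists_givensReduces_clear_below k hV t (by omega)
    set i : Fin n := ⟨k, by omega⟩
    set j : Fin n := ⟨k + t + 1, ht⟩
    have hij : i < j := by rw [Fin.lt_def]; simp only [i, j]; omega
    obtain ⟨η, hη, θ, hθ, hj⟩ := exists_givens_angles (W i k) (W j k)
    have hG : givensMatrix i j η θ ∈ givensRotations n := ⟨i, j, η, θ, hij, hη, hθ, rfl⟩
    refine ⟨_, hVW.trans (.conjTranspose_mul hG W), fun a m hm ham => ?_, fun a hka hat => ?_⟩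
    · have hWi : W i m = 0 := hW i m hm (by simp only [i]; omega)
      have hWj : W j m = 0 := hW j m hm (by simp only [j]; omega)
      rw [conjTranspose_givensMatrix_mul_apply hij.ne]
      split_ifs <;> simp [hWi, hWj, hW a m hm ham]
    · have hai : a ≠ i := fun h => by simp [h, i] at hka
      rw [conjTranspose_givensMatrix_mul_apply hij.ne, if_neg hai]
      split_ifs with haj
      · exact hj
      · exact hbelow a hka (by have := Fin.val_ne_of_ne haj; simp only [j] at this; omega)

lemma exists_givensReduces_firstColsDiagonal_succ {U V : Matrix (Fin n) (Fin r) ℂ}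
    (hU : Uᴴ * U = 1) {N : ℕ} (hUV : GivensReduces N U V) {k : Fin r} (hk : (k : ℕ) < n)
    (hV : FirstColsDiagonal k V) :
    ∃ W, GivensReduces (N + (n - 1 - k)) U W ∧ FirstColsDiagonal (k + 1) W := by
  obtain ⟨W, hVW, hW, hbelow⟩ := exists_givensReduces_clear_below k hV (n - 1 - k) (by omega)
  have hUW := hUV.trans hVW
  have hWW : Wᴴ * W = 1 := hUW.conjTranspose_mul_self_eq.trans hU
  refine ⟨W, hUW, fun a m hm ham => ?_⟩
  rcases Nat.lt_succ_iff_lt_or_eq.1 hm with hm | hm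
  · exact hW a m hm ham
  obtain rfl : m = k := Fin.ext hm
  rcases Nat.lt_or_gt_of_ne ham with ham | ham
  · exact apply_eq_zero_of_forall_ne_eq_zero (c := ⟨a, by omega⟩) hWW
      (fun b hb => hW b _ ham fun h => hb (Fin.ext h)) (Fin.ne_of_val_ne (by simp; omega))
  · exact hbelow a ham (by omega)

lemma exists_givensReduces_firstColsDiagonal (hrn : r ≤ n) {U : Matrix (Fin n) (Fin r) ℂ}
    (hU : Uᴴ * U = 1) :
    ∀ k ≤ r, ∃ V, GivensReduces (∑ t ∈ Finset.range k, (n - 1 - t)) U V ∧ FirstColsDiagonal k V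
  | 0, _ => ⟨U, .refl U, fun _ _ h => absurd h (Nat.not_lt_zero _)⟩
  | k + 1, hk => by
    obtain ⟨V, hUV, hV⟩ := exists_givensReduces_firstColsDiagonal hrn hU k (by omega)
    rw [Finset.sum_range_succ]
    exact exists_givensReduces_firstColsDiagonal_succ hU hUV (k := ⟨k, hk⟩) (by simp; omega) hV

lemma eq_rectId_mul_diagonal (hrn : r ≤ n) {V : Matrix (Fin n) (Fin r) ℂ}
    (hV : FirstColsDiagonal r V) : V = rectId n r * diagonal fun m => V (Fin.castLE hrn m) m := by
  ext a m
  rw [mul_diagonal, rectId, of_apply]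
  split_ifs with h
  · rw [one_mul, show a = Fin.castLE hrn m from Fin.ext h]
  · rw [zero_mul]; exact hV a m m.isLt h

lemma two_mul_sum_range_sub_one_sub (hrn : r ≤ n) :
    2 * ∑ t ∈ Finset.range r, (n - 1 - t) = (2 * n - r - 1) * r := by
  induction r with
  | zero => simp
  | succ r ih =>
    rw [Finset.sum_range_succ, mul_add, ih (by omega)]
    obtain ⟨s, rfl⟩ : ∃ s, n = r + 1 + s := ⟨n - (r + 1), by omega⟩
    rw [show 2 * (r + 1 + s) - r - 1 = r + 2 * s + 1 by omega,
      show 2 * (r + 1 + s) - (r + 1) - 1 = r + 2 * s by omega,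
      show r + 1 + s - 1 - r = s by omega]
    ring

theorem givens_parameterization_general {n r : ℕ} (hrn : r ≤ n)
    (U : Matrix (Fin n) (Fin r) ℂ) (hU : Uᴴ * U = 1) :
    ∃ L : List (Matrix (Fin n) (Fin n) ℂ),
      L.length ≤ (2 * n - r - 1) * r / 2 ∧
      (∀ A ∈ L, ∃ (i j : Fin n) (η θ : ℝ), i < j ∧ η ∈ Set.Icc 0 Real.pi ∧
        θ ∈ Set.Ico 0 (2 * Real.pi) ∧ A = givensMatrix i j η θ) ∧
      ∃ d : Fin r → ℂ, (∀ k, ‖d k‖ = 1) ∧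
        U = L.prod * rectId n r * Matrix.diagonal d := by
  obtain ⟨V, hUV, hV⟩ := exists_givensReduces_firstColsDiagonal hrn hU r le_rfl
  have hVV : Vᴴ * V = 1 := hUV.conjTranspose_mul_self_eq.trans hU
  have hd (m : Fin r) : ‖V (Fin.castLE hrn m) m‖ = 1 :=
    norm_apply_eq_one_of_forall_ne_eq_zero hVV fun b hb => hV b m m.isLt fun h => hb (Fin.ext h)
  obtain ⟨L, hlen, hL, rfl⟩ := hUV
  refine ⟨L, ?_, hL, _, hd, ?_⟩
  · have := two_mul_sum_range_sub_one_sub hrn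
    omega
  · rw [Matrix.mul_assoc, ← eq_rectId_mul_diagonal hrn hV]

/-- Givens parameterization of semi-orthogonal matrices: every `U ∈ ℂ^{n×r}` with `UᴴU = I`
can be written as `U = Q·Ī·D`, where `Q` is a product of at most `(2n − r − 1)r/2` complex
Givens rotation matrices `G(i,j,η,θ)` with `i < j`, `η ∈ [0,π]`, `θ ∈ [0,2π)`, `Ī` is the
rectangular identity, and `D = diag(d₁,…,d_r)` with unimodular `dₖ`. -/
theorem givens_parameterization {n r : ℕ} (hr : 1 ≤ r) (hrn : r ≤ n)
    (U : Matrix (Fin n) (Fin r) ℂ) (hU : Uᴴ * U = 1) :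
    ∃ L : List (Matrix (Fin n) (Fin n) ℂ),
      L.length ≤ (2 * n - r - 1) * r / 2 ∧
      (∀ A ∈ L, ∃ (i j : Fin n) (η θ : ℝ), i < j ∧ η ∈ Set.Icc 0 Real.pi ∧
        θ ∈ Set.Ico 0 (2 * Real.pi) ∧ A = givensMatrix i j η θ) ∧
      ∃ d : Fin r → ℂ, (∀ k, ‖d k‖ = 1) ∧
        U = L.prod * rectId n r * Matrix.diagonal d :=
  givens_parameterization_general hrn U hU
end
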